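/- If R is almost Gorenstein and I is a reflexive m-primary ideal (I = I**), then ω ⊆ Λ (in particular Λ is reflexive and I^n is reflexive for all n ≥ ν). -/

import Mathlib

/-!
A non-principal ideal `I` of the local ring `R` is not invertible, so its trace `I · (R : I)`
lies in `m`. Since `mω = m`, this gives `ωI · (R : I) ⊆ R`, i.e. `ωI ⊆ R : (R : I) = I`; hence
`ω` lies in every `Iⁿ : Iⁿ` with `n ≥ 1`. These colon rings grow with `n` and are constant once
`Iⁿ⁺¹ = xIⁿ`, so `Λ = I^ν : I^ν` contains `ω`. Finally, if `ωJ = J` then `ω : J = R : J`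
(because `ω : ω = R`), and the duality `ω : (ω : J) = J` turns into `R : (R : J) = J`; this
applies to `J = Λ` and to `J = Iᵐ`.
-/

open Submodule IsLocalRing

noncomputable section

/-- Length of an `R`-module, defined as the Krull dimension of its submodule lattice. -/
def modLength (R : Type*) [Ring R] (M : Type*) [AddCommGroup M] [Module R M] : WithBot ℕ∞ :=
  Order.krullDim (Submodule R M)

/-- Length of the quotient `I / J` for submodules `J ≤ I` of an ambient module. -/
def qlen (R : Type*) [CommRing R] {K : Type*} [AddCommGroup K] [Module R K]
    (I J : Submodule R K) : WithBot ℕ∞ :=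
  modLength R (I ⧸ (J.comap I.subtype))

/-- The image of an ideal of `R` in `K`, viewed as an `R`-submodule of `K`. -/
def idl (R : Type*) [CommRing R] (K : Type*) [CommRing K] [Algebra R K] (I : Ideal R) :
    Submodule R K :=
  Submodule.map (Algebra.linearMap R K) I

/-- The blowing-up `Λ(I) = ⋃ₙ (Iⁿ : Iⁿ)` of `R` along `I`, inside `K`. -/
def blowup (R : Type*) [CommRing R] (K : Type*) [CommRing K] [Algebra R K] (I : Ideal R) :
    Submodule R K :=
  ⨆ n : ℕ, (idl R K I ^ n) / (idl R K I ^ n)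

/-- The set of values of the nonzero elements of a fractional ideal. -/
def vvals {R : Type*} [CommRing R] {K : Type*} [CommRing K] [Algebra R K]
    (v : K → WithTop ℤ) (J : Submodule R K) : Set (WithTop ℤ) :=
  v '' {y | y ∈ J ∧ y ≠ 0}

namespace Submodule

section ColonIdeal

variable {R A : Type*} [CommSemiring R] [CommSemiring A] [Algebra R A]

theorem div_mul_le (J M : Submodule R A) : J / M * M ≤ J :=
  le_div_iff_mul_le.mp le_rfl

theorem div_self_mul_div_self_le (M : Submodule R A) : M / M * (M / M) ≤ M / M :=
  le_div_iff_mul_le.mpr <| by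
    rw [mul_assoc]
    exact (mul_le_mul_right (div_mul_le M M) _).trans (div_mul_le M M)

theorem div_self_le_mul_div_mul (M N : Submodule R A) : M / M ≤ M * N / (M * N) :=
  le_div_iff_mul_le.mpr <| by
    rw [← mul_assoc]
    exact mul_le_mul_left (div_mul_le M M) N

theorem div_self_le_pow_div_self_pow (M : Submodule R A) {n : ℕ} (hn : n ≠ 0) :
    M / M ≤ M ^ n / M ^ n := by
  obtain ⟨k, rfl⟩ := Nat.exists_eq_succ_of_ne_zero hn
  rw [pow_succ']
  exact div_self_le_mul_div_mul M (M ^ k)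

theorem pow_div_self_mono (M : Submodule R A) {m n : ℕ} (h : m ≤ n) :
    M ^ m / M ^ m ≤ M ^ n / M ^ n := by
  obtain ⟨k, rfl⟩ := Nat.exists_eq_add_of_le h
  rw [pow_add]
  exact div_self_le_mul_div_mul _ _

theorem mul_eq_self_of_le_div_self {ω M : Submodule R A} (h1 : 1 ≤ ω) (hM : ω ≤ M / M) :
    ω * M = M :=
  le_antisymm (le_div_iff_mul_le.mp hM) (by simpa using mul_le_mul_left h1 M)

theorem mul_le_self_of_eq_one_div_one_div {ω J N : Submodule R A} (hJ : J = 1 / (1 / J))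
    (hJN : J * (1 / J) ≤ N) (hNω : N * ω ≤ 1) : ω * J ≤ J := by
  conv_rhs => rw [hJ]
  refine le_div_iff_mul_le.mpr ?_
  calc ω * J * (1 / J) = J * (1 / J) * ω := by rw [mul_comm ω, mul_right_comm]
    _ ≤ N * ω := mul_le_mul_left hJN ω
    _ ≤ 1 := hNω

variable {ω M : Submodule R A}

theorem div_eq_one_div_of_mul_eq_self (h1 : 1 ≤ ω) (hωω : ω / ω = 1) (hM : ω * M = M) :
    ω / M = 1 / M := by
  refine le_antisymm (le_div_iff_mul_le.mpr ?_) (le_div_iff_mul_le.mpr ((div_mul_le 1 M).trans h1))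
  rw [← hωω]
  refine le_div_iff_mul_le.mpr ?_
  rw [mul_assoc, mul_comm M, hM]
  exact div_mul_le ω M

theorem mul_one_div_eq_self_of_mul_eq_self (h1 : 1 ≤ ω) (hM : ω * M = M) :
    ω * (1 / M) = 1 / M := by
  refine le_antisymm (le_div_iff_mul_le.mpr ?_) (by simpa using mul_le_mul_left h1 (1 / M))
  rw [mul_comm ω, mul_assoc, hM]
  exact div_mul_le 1 M

theorem eq_one_div_one_div_of_mul_eq_self (h1 : 1 ≤ ω) (hωω : ω / ω = 1)
    (hdual : ω / (ω / M) = M) (hM : ω * M = M) : M = 1 / (1 / M) := by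
  calc M = ω / (ω / M) := hdual.symm
    _ = 1 / (1 / M) := by
      rw [div_eq_one_div_of_mul_eq_self h1 hωω hM,
        div_eq_one_div_of_mul_eq_self h1 hωω (mul_one_div_eq_self_of_mul_eq_self h1 hM)]

end ColonIdeal

section Field

variable {R K : Type*} [CommRing R] [Field K] [Algebra R K]

theorem span_singleton_mul_div_self {c : K} (hc : c ≠ 0) (M : Submodule R K) :
    span R {c} * M / (span R {c} * M) = M / M := by
  have hcc : span R {c⁻¹} * span R {c} = 1 := by
    rw [span_mul_span, Set.singleton_mul_singleton, inv_mul_cancel₀ hc, one_eq_span]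
  refine le_antisymm (le_div_iff_mul_le.mpr ?_) (le_div_iff_mul_le.mpr ?_)
  · calc span R {c} * M / (span R {c} * M) * M
        = span R {c⁻¹} * (span R {c} * M / (span R {c} * M) * (span R {c} * M)) := by
          rw [mul_left_comm _ (span R {c}) M, ← mul_assoc, hcc, one_mul]
      _ ≤ span R {c⁻¹} * (span R {c} * M) := mul_le_mul_right (div_mul_le _ _) _
      _ = M := by rw [← mul_assoc, hcc, one_mul]
  · rw [mul_left_comm]
    exact mul_le_mul_right (div_mul_le M M) _

theorem iSup_pow_div_self_eq {A : Submodule R K} {c : K} (hc : c ≠ 0) {ν : ℕ}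
    (hA : ∀ k ≥ ν, A ^ (k + 1) = span R {c} * A ^ k) :
    ⨆ n : ℕ, A ^ n / A ^ n = A ^ ν / A ^ ν := by
  have hstable : ∀ n ≥ ν, A ^ n / A ^ n = A ^ ν / A ^ ν := by
    intro n hn
    induction n, hn using Nat.le_induction with
    | base => rfl
    | succ n hn ih => rw [hA n hn, span_singleton_mul_div_self hc, ih]
  refine le_antisymm (iSup_le fun n => ?_) (le_iSup (fun n => A ^ n / A ^ n) ν)
  rcases le_total n ν with h | h
  · exact pow_div_self_mono A h
  · exact (hstable n h).le

variable [IsDomain R] [IsFractionRing R K]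

theorem FG.div [IsNoetherianRing R] {A B : Submodule R K} (hA : A.FG) (hB : B.FG)
    (hB0 : B ≠ ⊥) : (A / B).FG := by
  let A' : FractionalIdeal (nonZeroDivisors R) K := ⟨A, FractionalIdeal.isFractional_of_fg hA⟩
  let B' : FractionalIdeal (nonZeroDivisors R) K := ⟨B, FractionalIdeal.isFractional_of_fg hB⟩
  have hB'0 : B' ≠ 0 := fun h => hB0 (FractionalIdeal.coeToSubmodule_eq_bot.mpr h)
  have hfg := FractionalIdeal.fg_of_isNoetherianRing le_rfl (A' / B')
  rwa [FractionalIdeal.coe_div hB'0] at hfg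

end Field

end Submodule

section IdealImage

variable {R K : Type*} [CommRing R] [CommRing K] [Algebra R K]

theorem idl_le_one (I : Ideal R) : idl R K I ≤ 1 := by
  rw [one_eq_range]
  exact LinearMap.map_le_range

theorem idl_mul (I J : Ideal R) : idl R K (I * J) = idl R K I * idl R K J :=
  IsLocalization.coeSubmodule_mul K I J

theorem idl_pow (I : Ideal R) (n : ℕ) : idl R K (I ^ n) = idl R K I ^ n :=
  Submodule.map_pow I (Algebra.ofId R K) n

theorem idl_span_singleton (x : R) : idl R K (Ideal.span {x}) = span R {algebraMap R K x} :=
  IsLocalization.coeSubmodule_span_singleton K x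

theorem idl_fg [IsNoetherianRing R] (I : Ideal R) : (idl R K I).FG :=
  (IsNoetherian.noetherian I).map _

theorem idl_ne_bot [IsFractionRing R K] {I : Ideal R} (hI : I ≠ ⊥) : idl R K I ≠ ⊥ := by
  rw [← IsLocalization.coeSubmodule_bot K]
  exact (IsFractionRing.coeSubmodule_injective R K).ne hI

end IdealImage

section LocalRing

variable {R K : Type*} [CommRing R] [IsDomain R] [IsLocalRing R] [Field K] [Algebra R K]
  [IsFractionRing R K]

theorem isPrincipal_of_idl_mul_one_div_eq_one {I : Ideal R}
    (h : idl R K I * (1 / idl R K I) = 1) : I.IsPrincipal := by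
  by_cases hI0 : I = ⊥
  · exact hI0 ▸ bot_isPrincipal
  set F : FractionalIdeal (nonZeroDivisors R) K := ↑I
  have hF0 : F ≠ 0 := FractionalIdeal.coeIdeal_ne_zero.mpr hI0
  have hinv : F * (1 / F) = 1 := by
    rw [← FractionalIdeal.coeToSubmodule_inj, FractionalIdeal.coe_mul,
      FractionalIdeal.coe_div hF0, FractionalIdeal.coe_one]
    exact h
  have hmax : {J : Ideal R | J.IsMaximal}.Finite :=
    (Set.finite_singleton (maximalIdeal R)).subset fun J hJ => IsLocalRing.eq_maximalIdeal hJ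
  have hF := FractionalIdeal.isPrincipal.of_finite_maximals_of_inv le_rfl hmax F (1 / F) hinv
  rwa [FractionalIdeal.coe_coeIdeal, IsFractionRing.coeSubmodule_isPrincipal] at hF

theorem idl_mul_one_div_le_idl_maximalIdeal {I : Ideal R} (hI : ¬ I.IsPrincipal) :
    idl R K I * (1 / idl R K I) ≤ idl R K (maximalIdeal R) := by
  obtain ⟨J, hJ⟩ : ∃ J : Ideal R, idl R K I * (1 / idl R K I) = idl R K J :=
    ⟨_, (map_comap_eq_self (by rw [← one_eq_range]; exact mul_one_div_le_one)).symm⟩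
  have hJ_ne_top : J ≠ ⊤ := by
    rintro rfl
    exact hI (isPrincipal_of_idl_mul_one_div_eq_one
      (hJ.trans (IsLocalization.coeSubmodule_top K)))
  rw [hJ]
  exact IsLocalization.coeSubmodule_mono K (le_maximalIdeal hJ_ne_top)

end LocalRing

theorem stmt_17_general
    (R : Type*) [CommRing R] [IsDomain R] [IsLocalRing R] [IsNoetherianRing R]
    (K : Type*) [Field K] [Algebra R K] [IsFractionRing R K]
    (I : Ideal R) (hI0 : I ≠ ⊥)
    (hInp : ¬ I.IsPrincipal)
    (x : R)
    (ν : ℕ) (hν : IsLeast {n : ℕ | ∀ k ≥ n, I ^ (k + 1) = Ideal.span {x} * I ^ k} ν)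
    (ω : Submodule R K) (hω1 : 1 ≤ ω)
    (hωω : ω / ω = 1)
    (hωdual : ∀ J : Submodule R K, J ≠ ⊥ → J.FG → ω / (ω / J) = J)
    (hAG : idl R K (maximalIdeal R) * ω = idl R K (maximalIdeal R))
    (hIrefl : (idl R K I) = (1 : Submodule R K) / ((1 : Submodule R K) / (idl R K I))) :
    ω ≤ (blowup R K I) ∧ (blowup R K I) = (1 : Submodule R K) / ((1 : Submodule R K) / (blowup R K I)) ∧
      ∀ m ≥ ν, (idl R K I) ^ m = (1 : Submodule R K) / ((1 : Submodule R K) / ((idl R K I) ^ m)) := by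
  have hν0 : ν ≠ 0 := by
    rintro rfl
    exact hInp ⟨⟨x, by simpa using hν.1 0 le_rfl⟩⟩
  have hx0 : algebraMap R K x ≠ 0 := by
    refine (map_ne_zero_iff _ (IsFractionRing.injective R K)).mpr fun hx => hI0 ?_
    have hbot := hν.1 ν le_rfl
    rw [hx, Ideal.span_singleton_eq_bot.mpr rfl, bot_mul] at hbot
    exact pow_eq_zero_iff (Nat.succ_ne_zero ν) |>.mp hbot
  have hΛ : blowup R K I = idl R K I ^ ν / idl R K I ^ ν :=
    iSup_pow_div_self_eq hx0 fun k hk => by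
      rw [← idl_pow, ← idl_pow, ← idl_span_singleton, ← idl_mul, hν.1 k hk]
  have hωI : ω ≤ idl R K I / idl R K I :=
    le_div_iff_mul_le.mpr <| mul_le_self_of_eq_one_div_one_div hIrefl
      (idl_mul_one_div_le_idl_maximalIdeal hInp) (hAG.le.trans (idl_le_one (maximalIdeal R)))
  have hωpow {m : ℕ} (hm : m ≠ 0) : ω ≤ idl R K I ^ m / idl R K I ^ m :=
    hωI.trans (div_self_le_pow_div_self_pow _ hm)
  have hreflexive {J : Submodule R K} (hJ0 : J ≠ ⊥) (hJfg : J.FG) (hωJ : ω ≤ J / J) :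
      J = 1 / (1 / J) :=
    eq_one_div_one_div_of_mul_eq_self hω1 hωω (hωdual J hJ0 hJfg)
      (mul_eq_self_of_le_div_self hω1 hωJ)
  have hpow_ne_bot (m : ℕ) : idl R K I ^ m ≠ ⊥ := by
    rw [← idl_pow]; exact idl_ne_bot (pow_ne_zero m hI0)
  have hpow_fg (m : ℕ) : (idl R K I ^ m).FG := by
    rw [← idl_pow]; exact idl_fg _
  refine ⟨hΛ ▸ hωpow hν0, ?_, fun m hm =>
    hreflexive (hpow_ne_bot m) (hpow_fg m) (hωpow (by omega))⟩
  rw [hΛ]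
  refine hreflexive ((Submodule.ne_bot_iff _).mpr ⟨1, one_mem_div.mpr le_rfl, one_ne_zero⟩)
    ((hpow_fg ν).div (hpow_fg ν) (hpow_ne_bot ν)) ?_
  exact (hωpow hν0).trans (le_div_iff_mul_le.mpr (div_self_mul_div_self_le _))

theorem stmt_17
    (R : Type*) [CommRing R] [IsDomain R] [IsLocalRing R] [IsNoetherianRing R]
    (K : Type*) [Field K] [Algebra R K] [IsFractionRing R K]
    [IsDiscreteValuationRing (integralClosure R K)]
    [Module.Finite R (integralClosure R K)]
    (hres : ∀ y : integralClosure R K, ∃ a : R,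
      y - algebraMap R (integralClosure R K) a ∈ maximalIdeal (integralClosure R K))
    (hkinf : Infinite (ResidueField R))
    (I : Ideal R) (hI0 : I ≠ ⊥) (hIrad : I.radical = maximalIdeal R)
    (hInp : ¬ I.IsPrincipal)
    (x : R) (hxI : x ∈ I)
    (ν : ℕ) (hν : IsLeast {n : ℕ | ∀ k ≥ n, I ^ (k + 1) = Ideal.span {x} * I ^ k} ν)
    (ω : Submodule R K) (hω1 : 1 ≤ ω) (hω2 : ω < ((integralClosure R K).toSubmodule))
    (hωω : ω / ω = 1)
    (hωdual : ∀ J : Submodule R K, J ≠ ⊥ → J.FG → ω / (ω / J) = J)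
    (hAG : idl R K (maximalIdeal R) * ω = idl R K (maximalIdeal R))
    (hIrefl : (idl R K I) = (1 : Submodule R K) / ((1 : Submodule R K) / (idl R K I))) :
    ω ≤ (blowup R K I) ∧ (blowup R K I) = (1 : Submodule R K) / ((1 : Submodule R K) / (blowup R K I)) ∧
      ∀ m ≥ ν, (idl R K I) ^ m = (1 : Submodule R K) / ((1 : Submodule R K) / ((idl R K I) ^ m)) :=
  stmt_17_general R K I hI0 hInp x ν hν ω hω1 hωω hωdual hAG hIrefl
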